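/- arXiv:1610.03339 — 5 statements merged into one kernel-verified Lean document; each statement's English description precedes it below -/
import Mathlib

section
/- Let n ≥ 1, let R : [0,1] → Mₙ(ℝ) be continuous with R(t) symmetric for every t ∈ [0,1], and let B : [0,1] → Mₙ(ℝ) be twice differentiable with B''(t) + R(t)·B(t) = 0 for all t ∈ [0,1], B(0) = Id, B'(0) symmetric, and B(t) invertible for every t ∈ [0,1]. Then det B(t) > 0 for all t ∈ [0,1], and the function y(t) := log det B(t) satisfies y''(t) + (1/n)·y'(t)² + tr R(t) ≤ 0 for all t ∈ (0,1). -/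
/-!
With `U = B' B⁻¹` one has `(log det B)' = tr U` and, from the Jacobi equation,
`(log det B)'' = -tr R - tr U²`. The Wronskian `Bᵀ B' - B'ᵀ B` of a Jacobi field is constant
because `R` is symmetric, and it vanishes at `0` since `B 0 = 1` and `B' 0` is symmetric; hence
`U` is symmetric and Cauchy–Schwarz gives `(tr U)² ≤ n · tr U²`. Positivity of `det B` comes
from `det B 0 = 1`, `det B ≠ 0` and connectedness of `[0, 1]`.
-/

open Set Matrix Filter Topology

section MatrixCalculus

variable {𝕜 : Type*} [NontriviallyNormedField 𝕜] {m n p : Type*} [Fintype n] {s : Set 𝕜} {t : 𝕜}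

theorem hasDerivWithinAt_matrix {A : 𝕜 → Matrix m n 𝕜} {A' : Matrix m n 𝕜} :
    HasDerivWithinAt A A' s t ↔ ∀ i j, HasDerivWithinAt (fun u => A u i j) (A' i j) s t :=
  hasDerivWithinAt_pi.trans (forall_congr' fun _ => hasDerivWithinAt_pi)

theorem hasDerivAt_matrix {A : 𝕜 → Matrix m n 𝕜} {A' : Matrix m n 𝕜} :
    HasDerivAt A A' t ↔ ∀ i j, HasDerivAt (fun u => A u i j) (A' i j) t :=
  hasDerivAt_pi.trans (forall_congr' fun _ => hasDerivAt_pi)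

theorem HasDerivWithinAt.matrix_transpose [Fintype m] {A : 𝕜 → Matrix m n 𝕜}
    {A' : Matrix m n 𝕜} (hA : HasDerivWithinAt A A' s t) :
    HasDerivWithinAt (fun u => (A u)ᵀ) A'ᵀ s t :=
  hasDerivWithinAt_matrix.2 fun i j => hasDerivWithinAt_matrix.1 hA j i

theorem HasDerivWithinAt.matrix_mul [Fintype p] {A : 𝕜 → Matrix m n 𝕜} {B : 𝕜 → Matrix n p 𝕜}
    {A' : Matrix m n 𝕜} {B' : Matrix n p 𝕜}
    (hA : HasDerivWithinAt A A' s t) (hB : HasDerivWithinAt B B' s t) :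
    HasDerivWithinAt (fun u => A u * B u) (A' * B t + A t * B') s t := by
  rw [hasDerivWithinAt_matrix] at *
  intro i j
  simp only [Matrix.add_apply, mul_apply, ← Finset.sum_add_distrib]
  exact HasDerivWithinAt.fun_sum fun k _ => (hA i k).mul (hB k j)

theorem HasDerivAt.matrix_mul [Fintype p] {A : 𝕜 → Matrix m n 𝕜} {B : 𝕜 → Matrix n p 𝕜}
    {A' : Matrix m n 𝕜} {B' : Matrix n p 𝕜} (hA : HasDerivAt A A' t) (hB : HasDerivAt B B' t) :
    HasDerivAt (fun u => A u * B u) (A' * B t + A t * B') t := by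
  rw [hasDerivAt_matrix] at *
  intro i j
  simp only [Matrix.add_apply, mul_apply, ← Finset.sum_add_distrib]
  exact HasDerivAt.fun_sum fun k _ => (hA i k).mul (hB k j)

theorem HasDerivAt.matrix_trace {A : 𝕜 → Matrix n n 𝕜} {A' : Matrix n n 𝕜}
    (hA : HasDerivAt A A' t) : HasDerivAt (fun u => (A u).trace) A'.trace t :=
  HasDerivAt.fun_sum fun i _ => hasDerivAt_matrix.1 hA i i

variable [DecidableEq n]

noncomputable def detRowContinuousMultilinear :
    ContinuousMultilinearMap 𝕜 (fun _ : n => n → 𝕜) 𝕜 :=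
  { (detRowAlternating : (n → 𝕜) [⋀^n]→ₗ[𝕜] 𝕜).toMultilinearMap with
    cont := continuous_id.matrix_det }

theorem det_updateRow_eq_sum_mul_adjugate (A : Matrix n n 𝕜) (i : n) (v : n → 𝕜) :
    (A.updateRow i v).det = ∑ j, v j * A.adjugate j i := by
  rw [det_eq_sum_mul_adjugate_row _ i]
  simp only [updateRow_self, adjugate_apply, updateRow_idem]

theorem sum_det_updateRow_eq_trace_adjugate_mul (A H : Matrix n n 𝕜) :
    ∑ i, (A.updateRow i (H i)).det = (A.adjugate * H).trace := by
  simp only [det_updateRow_eq_sum_mul_adjugate, trace, diag, mul_apply]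
  rw [Finset.sum_comm]
  simp only [mul_comm]

theorem HasDerivAt.matrix_det {A : 𝕜 → Matrix n n 𝕜} {A' : Matrix n n 𝕜}
    (hA : HasDerivAt A A' t) :
    HasDerivAt (fun u => (A u).det) ((A t).adjugate * A').trace t := by
  have hrows : HasDerivAt (fun u i j => A u i j) (fun i j => A' i j) t :=
    hasDerivAt_pi.2 fun i => hasDerivAt_pi.2 (hasDerivAt_matrix.1 hA i)
  have h := ((detRowContinuousMultilinear (𝕜 := 𝕜) (n := n)).hasFDerivAt
    (fun i j => A t i j)).comp_hasDerivAt t hrows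
  rw [ContinuousMultilinearMap.linearDeriv_apply] at h
  exact h.congr_deriv (sum_det_updateRow_eq_trace_adjugate_mul (A t) A')

-- The slope characterisation needs a norm on matrices; the sup norm induces their topology.
attribute [local instance] Matrix.normedAddCommGroup Matrix.normedSpace in
theorem HasDerivAt.matrix_inv {A : 𝕜 → Matrix n n 𝕜} {A' : Matrix n n 𝕜}
    (hA : HasDerivAt A A' t) (hdet : (A t).det ≠ 0) :
    HasDerivAt (fun u => (A u)⁻¹) (-((A t)⁻¹ * A' * (A t)⁻¹)) t := by
  have hinv_cont : ContinuousAt (fun u => (A u)⁻¹) t := by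
    refine (continuousAt_matrix_inv _ ?_).comp hA.continuousAt
    simpa only [Ring.inverse_eq_inv'] using continuousAt_inv₀ hdet
  have hdet_ev : ∀ᶠ u in 𝓝 t, (A u).det ≠ 0 :=
    (continuous_id.matrix_det.continuousAt.comp hA.continuousAt).eventually_ne hdet
  refine hasDerivAt_iff_tendsto_slope.2 <|
    (((hinv_cont.tendsto.mono_left nhdsWithin_le_nhds).mul
      (hasDerivAt_iff_tendsto_slope.1 hA)).mul_const _).neg.congr' ?_
  filter_upwards [nhdsWithin_le_nhds hdet_ev] with u hu
  -- `(A u)⁻¹ - (A t)⁻¹ = -((A u)⁻¹ * (A u - A t) * (A t)⁻¹)`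
  rw [slope_def_module, slope_def_module, Matrix.mul_smul, Matrix.smul_mul, ← smul_neg, mul_sub,
    sub_mul, mul_nonsing_inv_cancel_right _ _ (isUnit_iff_ne_zero.2 hdet),
    nonsing_inv_mul _ (isUnit_iff_ne_zero.2 hu), one_mul, neg_sub]

end MatrixCalculus

theorem HasDerivAt.log_det {n : Type*} [Fintype n] [DecidableEq n] {A : ℝ → Matrix n n ℝ}
    {A' : Matrix n n ℝ} {t : ℝ} (hA : HasDerivAt A A' t) (hdet : (A t).det ≠ 0) :
    HasDerivAt (fun u => Real.log (A u).det) ((A t)⁻¹ * A').trace t := by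
  convert hA.matrix_det.log hdet using 1
  rw [inv_def, Ring.inverse_eq_inv', Matrix.smul_mul, trace_smul, smul_eq_mul, div_eq_inv_mul]

theorem jacobi_wronskian_eq {𝕜 : Type*} [RCLike 𝕜] {n : Type*} [Fintype n]
    {R B B' B'' : 𝕜 → Matrix n n 𝕜} {s : Set 𝕜} (hs : Convex ℝ s)
    (hB : ∀ t ∈ s, HasDerivWithinAt B (B' t) s t) (hB' : ∀ t ∈ s, HasDerivWithinAt B' (B'' t) s t)
    (hJacobi : ∀ t ∈ s, B'' t + R t * B t = 0) (hR : ∀ t ∈ s, (R t).IsSymm)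
    {a t : 𝕜} (ha : a ∈ s) (ht : t ∈ s) :
    (B t)ᵀ * B' t - (B' t)ᵀ * B t = (B a)ᵀ * B' a - (B' a)ᵀ * B a := by
  have hderiv : ∀ u ∈ s, ∀ i j, HasDerivWithinAt
      (fun v => ((B v)ᵀ * B' v - (B' v)ᵀ * B v) i j) 0 s u := by
    intro u hu i j
    have hderiv_zero : (B' u)ᵀ * B' u + (B u)ᵀ * B'' u - ((B'' u)ᵀ * B u + (B' u)ᵀ * B' u) = 0 := by
      rw [eq_neg_of_add_eq_zero_left (hJacobi u hu), transpose_neg, transpose_mul, hR u hu]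
      simp only [Matrix.mul_neg, Matrix.neg_mul, Matrix.mul_assoc]
      abel
    exact ((hasDerivWithinAt_matrix.1 ((hB u hu).matrix_transpose.matrix_mul (hB' u hu)) i j).sub
      (hasDerivWithinAt_matrix.1 ((hB' u hu).matrix_transpose.matrix_mul (hB u hu)) i j)).congr_deriv
      (congrFun (congrFun hderiv_zero i) j)
  ext i j
  have h := hs.norm_image_sub_le_of_norm_hasDerivWithin_le (C := 0)
    (fun u hu => hderiv u hu i j) (fun _ _ => norm_zero.le) ha ht
  rwa [zero_mul, norm_le_zero_iff, sub_eq_zero] at h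

theorem IsPreconnected.det_pos {X : Type*} [TopologicalSpace X] {n : Type*} [Fintype n]
    [DecidableEq n] {s : Set X} {B : X → Matrix n n ℝ} (hs : IsPreconnected s)
    (hB : ContinuousOn B s) (hinv : ∀ x ∈ s, IsUnit (B x)) {a : X} (ha : a ∈ s)
    (hBa : 0 < (B a).det) {x : X} (hx : x ∈ s) : 0 < (B x).det :=
  hs.lt_of_ne (continuous_id.matrix_det.comp_continuousOn hB)
    (fun y hy => ((isUnit_iff_isUnit_det _).1 (hinv y hy)).ne_zero) ⟨a, ha, hBa⟩ hx

theorem isSymm_mul_inv_of_transpose_mul_eq {R : Type*} [CommRing R] {n : Type*} [Fintype n]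
    [DecidableEq n] {B B' : Matrix n n R} (hW : Bᵀ * B' = B'ᵀ * B) (hB : IsUnit B.det) :
    (B' * B⁻¹).IsSymm := by
  have hBt : IsUnit Bᵀ.det := by rwa [det_transpose]
  calc (B' * B⁻¹)ᵀ = (Bᵀ)⁻¹ * (B'ᵀ * B * B⁻¹) := by
        rw [transpose_mul, transpose_nonsing_inv, mul_nonsing_inv_cancel_right _ _ hB]
    _ = (Bᵀ)⁻¹ * (Bᵀ * (B' * B⁻¹)) := by rw [← hW, Matrix.mul_assoc]
    _ = B' * B⁻¹ := nonsing_inv_mul_cancel_left _ _ hBt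

theorem Matrix.IsSymm.trace_sq_div_card_le {n : Type*} [Fintype n] {U : Matrix n n ℝ}
    (hU : U.IsSymm) : U.trace ^ 2 / Fintype.card n ≤ (U * U).trace := by
  have hsq : (U * U).trace = ∑ i, ∑ k, U i k ^ 2 := by
    refine Finset.sum_congr rfl fun i _ => Finset.sum_congr rfl fun k _ => ?_
    exact (congrArg (U i k * ·) (hU.apply i k)).trans (sq _).symm
  rw [hsq]
  refine div_le_of_le_mul₀ (Nat.cast_nonneg _) (by positivity) ?_
  rw [mul_comm]
  calc U.trace ^ 2 ≤ Fintype.card n * ∑ i, U i i ^ 2 := sq_sum_le_card_mul_sum_sq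
    _ ≤ Fintype.card n * ∑ i, ∑ k, U i k ^ 2 := by
      gcongr with i
      exact Finset.single_le_sum (f := fun k => U i k ^ 2) (fun k _ => sq_nonneg _)
        (Finset.mem_univ i)

theorem HasDerivAt.trace_inv_mul {𝕜 : Type*} [NontriviallyNormedField 𝕜] {n : Type*} [Fintype n]
    [DecidableEq n] {A A' : 𝕜 → Matrix n n 𝕜} {A'' : Matrix n n 𝕜} {t : 𝕜}
    (hA : HasDerivAt A (A' t) t) (hA' : HasDerivAt A' A'' t) (hdet : (A t).det ≠ 0) :
    HasDerivAt (fun u => ((A u)⁻¹ * A' u).trace)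
      (((A t)⁻¹ * A'').trace - (A' t * (A t)⁻¹ * (A' t * (A t)⁻¹)).trace) t := by
  refine ((hA.matrix_inv hdet).matrix_mul hA').matrix_trace.congr_deriv ?_
  rw [trace_add, Matrix.neg_mul, trace_neg, trace_mul_comm, add_comm, ← sub_eq_add_neg]
  simp only [Matrix.mul_assoc]

theorem log_det_jacobi_estimate_general {n : ℕ}
    (R B B' B'' : ℝ → Matrix (Fin n) (Fin n) ℝ)
    (hRsymm : ∀ t ∈ Icc (0:ℝ) 1, (R t).IsSymm)
    (hB : ∀ t ∈ Icc (0:ℝ) 1, ∀ i j, HasDerivWithinAt (fun s => B s i j) (B' t i j) (Icc 0 1) t)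
    (hB' : ∀ t ∈ Icc (0:ℝ) 1, ∀ i j, HasDerivWithinAt (fun s => B' s i j) (B'' t i j) (Icc 0 1) t)
    (hJacobi : ∀ t ∈ Icc (0:ℝ) 1, B'' t + R t * B t = 0)
    (hB0 : B 0 = 1)
    (hB'0 : (B' 0).IsSymm)
    (hinv : ∀ t ∈ Icc (0:ℝ) 1, IsUnit (B t)) :
    (∀ t ∈ Icc (0:ℝ) 1, 0 < (B t).det) ∧
      ∀ t ∈ Ioo (0:ℝ) 1,
        deriv (deriv (fun s => Real.log (B s).det)) t
          + (1 / (n : ℝ)) * (deriv (fun s => Real.log (B s).det) t) ^ 2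
          + (R t).trace ≤ 0 := by
  have hdet : ∀ t ∈ Icc (0:ℝ) 1, IsUnit (B t).det := fun t ht =>
    (isUnit_iff_isUnit_det _).1 (hinv t ht)
  have hBw : ∀ t ∈ Icc (0:ℝ) 1, HasDerivWithinAt B (B' t) (Icc 0 1) t := fun t ht =>
    hasDerivWithinAt_matrix.2 (hB t ht)
  have hB'w : ∀ t ∈ Icc (0:ℝ) 1, HasDerivWithinAt B' (B'' t) (Icc 0 1) t := fun t ht =>
    hasDerivWithinAt_matrix.2 (hB' t ht)
  have hBcont : ContinuousOn B (Icc 0 1) := continuousOn_pi.2 fun i =>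
    continuousOn_pi.2 fun j t ht => (hB t ht i j).continuousWithinAt
  refine ⟨fun t ht => isPreconnected_Icc.det_pos hBcont hinv (left_mem_Icc.2 zero_le_one)
    (by simp [hB0]) ht, fun t ht => ?_⟩
  have ht' : t ∈ Icc (0:ℝ) 1 := Ioo_subset_Icc_self ht
  have hB_at : ∀ s ∈ Ioo (0:ℝ) 1, HasDerivAt B (B' s) s := fun s hs => hasDerivAt_matrix.2
    fun i j => (hB s (Ioo_subset_Icc_self hs) i j).hasDerivAt (Icc_mem_nhds hs.1 hs.2)
  have hy' : deriv (fun s => Real.log (B s).det) =ᶠ[𝓝 t] fun s => ((B s)⁻¹ * B' s).trace :=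
    eventually_of_mem (isOpen_Ioo.mem_nhds ht) fun s hs =>
      ((hB_at s hs).log_det (hdet s (Ioo_subset_Icc_self hs)).ne_zero).deriv
  have hy'' := (hB_at t ht).trace_inv_mul (hasDerivAt_matrix.2 fun i j =>
    (hB' t ht' i j).hasDerivAt (Icc_mem_nhds ht.1 ht.2)) (hdet t ht').ne_zero
  have hW : (B t)ᵀ * B' t = (B' t)ᵀ * B t := by
    rw [← sub_eq_zero, jacobi_wronskian_eq (convex_Icc 0 1) hBw hB'w hJacobi hRsymm
      (left_mem_Icc.2 zero_le_one) ht', hB0, transpose_one, one_mul, mul_one, hB'0, sub_self]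
  have hR : ((B t)⁻¹ * B'' t).trace = -(R t).trace := by
    rw [eq_neg_of_add_eq_zero_left (hJacobi t ht'), Matrix.mul_neg, trace_neg, trace_mul_comm,
      Matrix.mul_assoc, mul_nonsing_inv _ (hdet t ht'), mul_one]
  have hcs := (isSymm_mul_inv_of_transpose_mul_eq hW (hdet t ht')).trace_sq_div_card_le
  rw [Fintype.card_fin] at hcs
  rw [hy'.deriv_eq, hy''.deriv, hy'.eq_of_nhds, hR, trace_mul_comm (B t)⁻¹, one_div_mul_eq_div]
  linarith

/-- **Jacobian (log-determinant) estimate from the matrix Jacobi equation.**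
If `B : [0,1] → Mₙ(ℝ)` is twice differentiable (entrywise) with `B'' + R·B = 0`, `B 0 = Id`,
`B' 0` symmetric, `R t` symmetric, and `B t` invertible for all `t ∈ [0,1]`, then
`det B t > 0` on `[0,1]` and `y := log det B` satisfies
`y'' + (1/n)·(y')² + tr R ≤ 0` on `(0,1)`. -/
theorem log_det_jacobi_estimate {n : ℕ} (hn : 1 ≤ n)
    (R B B' B'' : ℝ → Matrix (Fin n) (Fin n) ℝ)
    (hRcont : ∀ i j, ContinuousOn (fun t => R t i j) (Icc 0 1))
    (hRsymm : ∀ t ∈ Icc (0:ℝ) 1, (R t).IsSymm)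
    (hB : ∀ t ∈ Icc (0:ℝ) 1, ∀ i j, HasDerivWithinAt (fun s => B s i j) (B' t i j) (Icc 0 1) t)
    (hB' : ∀ t ∈ Icc (0:ℝ) 1, ∀ i j, HasDerivWithinAt (fun s => B' s i j) (B'' t i j) (Icc 0 1) t)
    (hJacobi : ∀ t ∈ Icc (0:ℝ) 1, B'' t + R t * B t = 0)
    (hB0 : B 0 = 1)
    (hB'0 : (B' 0).IsSymm)
    (hinv : ∀ t ∈ Icc (0:ℝ) 1, IsUnit (B t)) :
    (∀ t ∈ Icc (0:ℝ) 1, 0 < (B t).det) ∧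
      ∀ t ∈ Ioo (0:ℝ) 1,
        deriv (deriv (fun s => Real.log (B s).det)) t
          + (1 / (n : ℝ)) * (deriv (fun s => Real.log (B s).det) t) ^ 2
          + (R t).trace ≤ 0 :=
  log_det_jacobi_estimate_general R B B' B'' hRsymm hB hB' hJacobi hB0 hB'0 hinv
end

section
/- Let n ≥ p ≥ 1 and let J₁,…,J_p : [0,1] → ℝⁿ be differentiable curves such that (J₁(t),…,J_p(t)) are linearly independent for every t ∈ [0,1] and (J₁(0),…,J_p(0)) = (e₁,…,e_p) is an orthonormal family. Set Σ_t := span{J₁(t),…,J_p(t)}, let B(t) : Σ₀ → Σ_t be the linear map determined by B(t)e_i = J_i(t), and define U(t) : Σ_t → ℝⁿ by U(t) := B'(t)∘B(t)⁻¹, where B'(t) is the linear map with B'(t)e_i = J_i'(t). Let E₁,…,E_p : [0,1] → ℝⁿ be differentiable curves with E_i(t) ∈ Σ_t for all t, E_i(0) = e_i, and such that the orthogonal projection of E_i'(t) onto Σ_t vanishes for every t ∈ [0,1]. Then for every i ∈ {1,…,p} and every t ∈ [0,1], E_i'(t) = (U(t)E_i(t))^⊥, the orthogonal projection of U(t)E_i(t)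 onto the orthogonal complement of Σ_t in ℝⁿ. -/
/-!
Write `Eᵢ(s) = ∑ₖ dₖ(s) • Jₖ(s)`. The coefficients `d(s)` are the inverse Gram matrix of `J(s)`
applied to the inner products `⟪Jⱼ(s), Eᵢ(s)⟫`, so by Cramer's rule they are differentiable. The
product rule gives `Eᵢ' = ∑ₖ dₖ • Jₖ' + ∑ₖ dₖ' • Jₖ`, and the second sum lies in `Σ_t`. As `Eᵢ'(t)`
is normal to `Σ_t`, it is therefore the normal part of `∑ₖ dₖ(t) • Jₖ'(t) = U(t)Eᵢ(t)`.
-/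

open Set Matrix
open scoped RealInnerProductSpace

section MatrixCalculus

variable {ι 𝕜 : Type*} [Fintype ι] [DecidableEq ι] [NontriviallyNormedField 𝕜]
  {M : 𝕜 → Matrix ι ι 𝕜} {s : Set 𝕜} {x : 𝕜}

theorem DifferentiableWithinAt.matrix_det
    (hM : ∀ i j, DifferentiableWithinAt 𝕜 (fun y => M y i j) s x) :
    DifferentiableWithinAt 𝕜 (fun y => (M y).det) s x := by
  simp only [det_apply']
  exact .fun_sum fun σ _ =>
    (DifferentiableWithinAt.fun_finsetProd fun k _ => hM (σ k) k).const_mul _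

theorem DifferentiableWithinAt.matrix_adjugate
    (hM : ∀ i j, DifferentiableWithinAt 𝕜 (fun y => M y i j) s x) (i j : ι) :
    DifferentiableWithinAt 𝕜 (fun y => (M y).adjugate i j) s x := by
  simp only [adjugate_apply]
  refine .matrix_det fun a b => ?_
  by_cases h : a = j
  · simp only [h, updateRow_self]
    exact differentiableWithinAt_const _
  · simpa only [updateRow_ne h] using hM a b

theorem DifferentiableWithinAt.matrix_inv
    (hM : ∀ i j, DifferentiableWithinAt 𝕜 (fun y => M y i j) s x) (hdet : (M x).det ≠ 0)
    (i j : ι) : DifferentiableWithinAt 𝕜 (fun y => (M y)⁻¹ i j) s x := by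
  simp only [inv_def, Ring.inverse_eq_inv', Matrix.smul_apply, smul_eq_mul]
  exact ((DifferentiableWithinAt.matrix_det hM).inv hdet).mul (.matrix_adjugate hM i j)

end MatrixCalculus

section GramCoeffs

variable {ι F : Type*} [Fintype ι] [NormedAddCommGroup F] [InnerProductSpace ℝ F]

theorem gram_mulVec (v : ι → F) (a : ι → ℝ) :
    gram ℝ v *ᵥ a = fun j => ⟪v j, ∑ k, a k • v k⟫ := by
  ext j
  simp only [mulVec, dotProduct, gram_apply, inner_sum, real_inner_smul_right, mul_comm]

variable [DecidableEq ι]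

noncomputable def gramCoeffs (v : ι → F) (x : F) : ι → ℝ :=
  (gram ℝ v)⁻¹ *ᵥ fun j => ⟪v j, x⟫

theorem gramCoeffs_sum_smul {v : ι → F} (hv : LinearIndependent ℝ v) (a : ι → ℝ) :
    gramCoeffs v (∑ k, a k • v k) = a := by
  have : IsUnit (gram ℝ v).det := (det_gram_ne_zero_iff_linearIndependent.2 hv).isUnit
  rw [gramCoeffs, ← gram_mulVec, mulVec_mulVec, nonsing_inv_mul _ this, one_mulVec]

theorem sum_gramCoeffs_smul {v : ι → F} (hv : LinearIndependent ℝ v) {x : F}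
    (hx : x ∈ Submodule.span ℝ (range v)) : ∑ k, gramCoeffs v x k • v k = x := by
  obtain ⟨a, rfl⟩ := (Submodule.mem_span_range_iff_exists_fun ℝ).1 hx
  rw [gramCoeffs_sum_smul hv]

theorem DifferentiableWithinAt.gramCoeffs {v : ℝ → ι → F} {X : ℝ → F} {s : Set ℝ} {t : ℝ}
    (hv : ∀ i, DifferentiableWithinAt ℝ (fun u => v u i) s t)
    (hX : DifferentiableWithinAt ℝ X s t) (hli : LinearIndependent ℝ (v t)) (k : ι) :
    DifferentiableWithinAt ℝ (fun u => gramCoeffs (v u) (X u) k) s t := by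
  have hgram : ∀ i j, DifferentiableWithinAt ℝ (fun u => gram ℝ (v u) i j) s t :=
    fun i j => (hv i).inner ℝ (hv j)
  simp only [_root_.gramCoeffs, mulVec, dotProduct]
  exact .fun_sum fun j _ => (DifferentiableWithinAt.matrix_inv hgram
    (det_gram_ne_zero_iff_linearIndependent.2 hli) k j).mul ((hv j).inner ℝ hX)

end GramCoeffs

theorem sub_sum_smul_deriv_mem_span {ι F : Type*} [Fintype ι] [NormedAddCommGroup F]
    [InnerProductSpace ℝ F] {J : ι → ℝ → F} {J' : ι → F} {X : ℝ → F} {X' : F} {s : Set ℝ}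
    {t : ℝ} (ht : t ∈ s) (hs : UniqueDiffWithinAt ℝ s t)
    (hJ : ∀ i, HasDerivWithinAt (J i) (J' i) s t)
    (hli : ∀ u ∈ s, LinearIndependent ℝ fun i => J i u) (hX : HasDerivWithinAt X X' s t)
    (hXmem : ∀ u ∈ s, X u ∈ Submodule.span ℝ (range fun i => J i u))
    {c : ι → ℝ} (hc : X t = ∑ i, c i • J i t) :
    X' - ∑ i, c i • J' i ∈ Submodule.span ℝ (range fun i => J i t) := by
  classical
  set d : ℝ → ι → ℝ := fun u => gramCoeffs (fun i => J i u) (X u)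
  have hXd : ∀ u ∈ s, X u = ∑ k, d u k • J k u := fun u hu =>
    (sum_gramCoeffs_smul (hli u hu) (hXmem u hu)).symm
  have hdt : d t = c := by simp only [d, hc, gramCoeffs_sum_smul (hli t ht)]
  have hd (k : ι) : HasDerivWithinAt (fun u => d u k)
      (derivWithin (fun u => d u k) s t) s t :=
    (DifferentiableWithinAt.gramCoeffs (fun i => (hJ i).differentiableWithinAt)
      hX.differentiableWithinAt (hli t ht) k).hasDerivWithinAt
  have hX' : HasDerivWithinAt X
      (∑ k, (d t k • J' k + derivWithin (fun u => d u k) s t • J k t)) s t :=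
    (HasDerivWithinAt.fun_sum fun k _ => (hd k).smul (hJ k)).congr hXd (hXd t ht)
  rw [hs.eq_deriv s hX hX', Finset.sum_add_distrib, hdt, add_sub_cancel_left]
  exact Submodule.sum_mem _ fun k _ => Submodule.smul_mem _ _ (Submodule.subset_span ⟨k, rfl⟩)

theorem frame_derivative_eq_normal_part_general {n p : ℕ}
    (J J' E E' : Fin p → ℝ → EuclideanSpace ℝ (Fin n))
    (hJ : ∀ i, ∀ t ∈ Icc (0:ℝ) 1, HasDerivWithinAt (J i) (J' i t) (Icc 0 1) t)
    (hli : ∀ t ∈ Icc (0:ℝ) 1, LinearIndependent ℝ (fun i => J i t))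
    (hE : ∀ i, ∀ t ∈ Icc (0:ℝ) 1, HasDerivWithinAt (E i) (E' i t) (Icc 0 1) t)
    (hEmem : ∀ i, ∀ t ∈ Icc (0:ℝ) 1,
      E i t ∈ Submodule.span ℝ (Set.range fun j => J j t))
    (hproj : ∀ i, ∀ t ∈ Icc (0:ℝ) 1,
      Submodule.orthogonalProjectionOnto (Submodule.span ℝ (Set.range fun j => J j t)) (E' i t) = 0) :
    ∀ i, ∀ t ∈ Icc (0:ℝ) 1, ∀ c : Fin p → ℝ, E i t = ∑ j, c j • J j t →
      E' i t =
        (Submodule.orthogonalProjectionOnto (Submodule.span ℝ (Set.range fun j => J j t))ᗮ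
          (∑ j, c j • J' j t) : EuclideanSpace ℝ (Fin n)) := by
  intro i t ht c hc
  set K := Submodule.span ℝ (Set.range fun j => J j t)
  have hnormal : E' i t ∈ Kᗮ := Submodule.orthogonalProjectionOnto_eq_zero_iff.1 (hproj i t ht)
  have htangent : E' i t - ∑ j, c j • J' j t ∈ K :=
    sub_sum_smul_deriv_mem_span ht (uniqueDiffOn_Icc one_pos t ht) (fun j => hJ j t ht) hli
      (hE i t ht) (hEmem i) hc
  calc E' i t = (Kᗮ.orthogonalProjectionOnto (E' i t) : EuclideanSpace ℝ (Fin n)) := by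
        rw [Submodule.orthogonalProjectionOnto_mem_subspace_eq_self (⟨_, hnormal⟩ : Kᗮ)]
    _ = _ := by
      rw [← sub_eq_zero, ← Submodule.coe_sub, ← map_sub,
        Submodule.orthogonalProjectionOnto_orthogonal_apply_eq_zero htangent, Submodule.coe_zero]

/-- **Derivative of the adapted frame equals the normal part of the Jacobi operator.**
Given linearly independent differentiable curves `J₁, …, J_p : [0,1] → ℝⁿ` (Jacobi fields),
with `Σ_t := span{J₁(t), …, J_p(t)}`, and an adapted frame `E₁, …, E_p` with `Eᵢ(t) ∈ Σ_t`,
`Eᵢ(0) = Jᵢ(0)` and tangential part of `Eᵢ'(t)` vanishing, for every representation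
`Eᵢ(t) = ∑ⱼ cⱼ • Jⱼ(t)` (so that `U(t)Eᵢ(t) = ∑ⱼ cⱼ • Jⱼ'(t)`, where `U(t) = B'(t)∘B(t)⁻¹`
with `B(t)eᵢ = Jᵢ(t)`) one has `Eᵢ'(t) = (U(t)Eᵢ(t))^⊥`, the projection onto the orthogonal
complement of `Σ_t`. -/
theorem frame_derivative_eq_normal_part {n p : ℕ} (hp : 1 ≤ p) (hpn : p ≤ n)
    (J J' E E' : Fin p → ℝ → EuclideanSpace ℝ (Fin n))
    (hJ : ∀ i, ∀ t ∈ Icc (0:ℝ) 1, HasDerivWithinAt (J i) (J' i t) (Icc 0 1) t)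
    (hli : ∀ t ∈ Icc (0:ℝ) 1, LinearIndependent ℝ (fun i => J i t))
    (h0 : Orthonormal ℝ (fun i => J i 0))
    (hE : ∀ i, ∀ t ∈ Icc (0:ℝ) 1, HasDerivWithinAt (E i) (E' i t) (Icc 0 1) t)
    (hEmem : ∀ i, ∀ t ∈ Icc (0:ℝ) 1,
      E i t ∈ Submodule.span ℝ (Set.range fun j => J j t))
    (hE0 : ∀ i, E i 0 = J i 0)
    (hproj : ∀ i, ∀ t ∈ Icc (0:ℝ) 1,
      Submodule.orthogonalProjectionOnto (Submodule.span ℝ (Set.range fun j => J j t)) (E' i t) = 0) :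
    ∀ i, ∀ t ∈ Icc (0:ℝ) 1, ∀ c : Fin p → ℝ, E i t = ∑ j, c j • J j t →
      E' i t =
        (Submodule.orthogonalProjectionOnto (Submodule.span ℝ (Set.range fun j => J j t))ᗮ
          (∑ j, c j • J' j t) : EuclideanSpace ℝ (Fin n)) :=
  frame_derivative_eq_normal_part_general J J' E E' hJ hli hE hEmem hproj
end

section
/- Let K ∈ ℝ and θ > 0, and if K > 0 assume Kθ² < π². Define σ_{K,1}^{(t)}(θ) := sin(tθ√K)/sin(θ√K) if K > 0, σ_{K,1}^{(t)}(θ) := t if K = 0, and σ_{K,1}^{(t)}(θ) := sinh(tθ√(−K))/sinh(θ√(−K)) if K < 0. Let u : [0,1] → (0,∞) be continuous on [0,1], twice differentiable on (0,1), and satisfy u''(t) + Kθ²·u(t) ≤ 0 for all t ∈ (0,1). Then for every t ∈ [0,1], u(t) ≥ σ_{K,1}^{(1−t)}(θ)·u(0) + σ_{K,1}^{(t)}(θ)·u(1). -/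
open Set

/-!
Sturm comparison. With `λ = Kθ²`, `σ` solves `σ'' = -λσ` with `σ 0 = 0`, `σ 1 = 1` and
`σ > 0` on `(0,1]` (for `K > 0` this is where `Kθ² < π²` enters). Hence
`v t = σ(1-t)·u 0 + σ t·u 1` solves the equation with the boundary values of `u`, and
`φ t = σ(1-t) + σ t` is a positive solution. For the supersolution `w = u - v` the Wronskian
`W = w'φ - wφ'` is antitone and `(w/φ)' = W/φ²`, so `w/φ` first increases and then decreases;
it is therefore bounded below by its boundary values, which vanish.
-/

section Sturm

variable {a b lam : ℝ} {w w' w'' φ φ' : ℝ → ℝ}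

theorem min_le_of_hasDerivAt_div_of_antitoneOn {g W ρ : ℝ → ℝ}
    (hg : ContinuousOn g (Icc a b)) (hg' : ∀ x ∈ Ioo a b, HasDerivAt g (W x / ρ x) x)
    (hρ : ∀ x ∈ Ioo a b, 0 < ρ x) (hW : AntitoneOn W (Ioo a b)) :
    ∀ t ∈ Icc a b, min (g a) (g b) ≤ g t := by
  intro t ht
  by_contra! hlt
  have hat : a < t := ht.1.lt_of_ne (by rintro rfl; exact (min_le_left _ _).not_gt hlt)
  have htb : t < b := ht.2.lt_of_ne (by rintro rfl; exact (min_le_right _ _).not_gt hlt)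
  obtain ⟨x, hx, hgx⟩ := exists_hasDerivAt_eq_slope g _ hat (hg.mono (Icc_subset_Icc_right ht.2))
    fun x hx => hg' x ⟨hx.1, hx.2.trans htb⟩
  obtain ⟨y, hy, hgy⟩ := exists_hasDerivAt_eq_slope g _ htb (hg.mono (Icc_subset_Icc_left ht.1))
    fun y hy => hg' y ⟨hat.trans hy.1, hy.2⟩
  have hxI : x ∈ Ioo a b := ⟨hx.1, hx.2.trans htb⟩
  have hyI : y ∈ Ioo a b := ⟨hat.trans hy.1, hy.2⟩
  have hWx : W x < 0 := by
    have : W x / ρ x < 0 := by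
      rw [hgx]; exact div_neg_of_neg_of_pos (by linarith [min_le_left (g a) (g b)]) (by linarith)
    simpa using (div_lt_iff₀ (hρ x hxI)).1 this
  have hWy : 0 < W y := by
    have : 0 < W y / ρ y := by
      rw [hgy]; exact div_pos (by linarith [min_le_right (g a) (g b)]) (by linarith)
    exact (div_pos_iff_of_pos_right (hρ y hyI)).1 this
  linarith [hW hxI hyI (hx.2.trans hy.1).le]

theorem antitoneOn_wronskian
    (hw' : ∀ t ∈ Ioo a b, HasDerivAt w (w' t) t) (hw'' : ∀ t ∈ Ioo a b, HasDerivAt w' (w'' t) t)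
    (hw : ∀ t ∈ Ioo a b, w'' t + lam * w t ≤ 0)
    (hφ' : ∀ t ∈ Ioo a b, HasDerivAt φ (φ' t) t)
    (hφ'' : ∀ t ∈ Ioo a b, HasDerivAt φ' (-lam * φ t) t) (hφ : ∀ t ∈ Ioo a b, 0 ≤ φ t) :
    AntitoneOn (fun t => w' t * φ t - w t * φ' t) (Ioo a b) := by
  have hW : ∀ t ∈ Ioo a b, HasDerivAt (fun t => w' t * φ t - w t * φ' t)
      ((w'' t + lam * w t) * φ t) t := fun t ht =>
    (((hw'' t ht).mul (hφ' t ht)).sub ((hw' t ht).mul (hφ'' t ht))).congr_deriv (by ring)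
  refine antitoneOn_of_hasDerivWithinAt_nonpos (f' := fun t => (w'' t + lam * w t) * φ t)
    (convex_Ioo a b) (fun t ht => (hW t ht).continuousAt.continuousWithinAt)
    (fun t ht => ?_) (fun t ht => ?_)
  · rw [interior_Ioo] at ht ⊢
    exact (hW t ht).hasDerivWithinAt
  · rw [interior_Ioo] at ht
    exact mul_nonpos_of_nonpos_of_nonneg (hw t ht) (hφ t ht)

theorem nonneg_of_supersolution (hwc : ContinuousOn w (Icc a b))
    (hw' : ∀ t ∈ Ioo a b, HasDerivAt w (w' t) t) (hw'' : ∀ t ∈ Ioo a b, HasDerivAt w' (w'' t) t)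
    (hw : ∀ t ∈ Ioo a b, w'' t + lam * w t ≤ 0) (hwa : 0 ≤ w a) (hwb : 0 ≤ w b)
    (hφc : ContinuousOn φ (Icc a b)) (hφ' : ∀ t ∈ Ioo a b, HasDerivAt φ (φ' t) t)
    (hφ'' : ∀ t ∈ Ioo a b, HasDerivAt φ' (-lam * φ t) t) (hφ : ∀ t ∈ Icc a b, 0 < φ t) :
    ∀ t ∈ Icc a b, 0 ≤ w t := by
  intro t ht
  have hab : a ≤ b := ht.1.trans ht.2
  have hmin := min_le_of_hasDerivAt_div_of_antitoneOn (hwc.div hφc fun t ht => (hφ t ht).ne')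
    (fun t ht => (hw' t ht).div (hφ' t ht) (hφ t (Ioo_subset_Icc_self ht)).ne')
    (fun t ht => pow_pos (hφ t (Ioo_subset_Icc_self ht)) 2)
    (antitoneOn_wronskian hw' hw'' hw hφ' hφ'' fun t ht => (hφ t (Ioo_subset_Icc_self ht)).le)
    t ht
  have hquot : 0 ≤ w t / φ t :=
    (le_min (div_nonneg hwa (hφ a (left_mem_Icc.2 hab)).le)
      (div_nonneg hwb (hφ b (right_mem_Icc.2 hab)).le)).trans hmin
  simpa using (le_div_iff₀ (hφ t ht)).1 hquot

end Sturm

theorem hasDerivAt_reflect_combination {lam : ℝ} {σ σ' : ℝ → ℝ}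
    (hσ : ∀ t, HasDerivAt σ (σ' t) t ∧ HasDerivAt σ' (-lam * σ t) t) (p q t : ℝ) :
    HasDerivAt (fun t => σ (1 - t) * p + σ t * q) (-σ' (1 - t) * p + σ' t * q) t ∧
      HasDerivAt (fun t => -σ' (1 - t) * p + σ' t * q) (-lam * (σ (1 - t) * p + σ t * q)) t :=
  ⟨((((hσ (1 - t)).1.comp_const_sub 1 t).mul_const p).add ((hσ t).1.mul_const q)).congr_deriv
      (by ring),
    (((((hσ (1 - t)).2.comp_const_sub 1 t).neg.mul_const p).add ((hσ t).2.mul_const q))).congr_deriv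
      (by ring)⟩

/-- The properties of `t ↦ σ_{K,1}^{(t)}(θ)` that the comparison uses, with `lam = Kθ²`. -/
structure IsNormalizedSolution (lam : ℝ) (σ : ℝ → ℝ) : Prop where
  map_zero : σ 0 = 0
  map_one : σ 1 = 1
  pos : ∀ t ∈ Ioc (0 : ℝ) 1, 0 < σ t
  hasDerivAt_twice : ∃ σ' : ℝ → ℝ, ∀ t, HasDerivAt σ (σ' t) t ∧ HasDerivAt σ' (-lam * σ t) t

namespace IsNormalizedSolution

variable {lam : ℝ} {σ : ℝ → ℝ}

theorem nonneg (hσ : IsNormalizedSolution lam σ) {t : ℝ} (ht : t ∈ Icc (0 : ℝ) 1) : 0 ≤ σ t :=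
  ht.1.eq_or_lt.elim (fun h => h ▸ hσ.map_zero.ge) fun h => (hσ.pos t ⟨h, ht.2⟩).le

theorem reflect_add_pos (hσ : IsNormalizedSolution lam σ) {t : ℝ} (ht : t ∈ Icc (0 : ℝ) 1) :
    0 < σ (1 - t) + σ t := by
  rcases ht.1.eq_or_lt with rfl | h0
  · simp [hσ.map_one, hσ.map_zero]
  · linarith [hσ.pos t ⟨h0, ht.2⟩, hσ.nonneg (t := 1 - t) ⟨by linarith [ht.2], by linarith⟩]

theorem le_of_supersolution (hσ : IsNormalizedSolution lam σ) {u u' u'' : ℝ → ℝ}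
    (huc : ContinuousOn u (Icc 0 1)) (hu : ∀ t ∈ Ioo (0 : ℝ) 1, HasDerivAt u (u' t) t)
    (hu' : ∀ t ∈ Ioo (0 : ℝ) 1, HasDerivAt u' (u'' t) t)
    (hineq : ∀ t ∈ Ioo (0 : ℝ) 1, u'' t + lam * u t ≤ 0) :
    ∀ t ∈ Icc (0 : ℝ) 1, σ (1 - t) * u 0 + σ t * u 1 ≤ u t := by
  obtain ⟨σ', hσ'⟩ := hσ.hasDerivAt_twice
  have hv := hasDerivAt_reflect_combination hσ' (u 0) (u 1)
  have hφ := hasDerivAt_reflect_combination hσ' 1 1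
  have hvc : Continuous fun t => σ (1 - t) * u 0 + σ t * u 1 :=
    continuous_iff_continuousAt.2 fun t => (hv t).1.continuousAt
  have hφc : Continuous fun t => σ (1 - t) * 1 + σ t * 1 :=
    continuous_iff_continuousAt.2 fun t => (hφ t).1.continuousAt
  have hdiff := nonneg_of_supersolution (w := fun t => u t - (σ (1 - t) * u 0 + σ t * u 1))
    (huc.sub hvc.continuousOn)
    (fun t ht => (hu t ht).sub (hv t).1) (fun t ht => (hu' t ht).sub (hv t).2)
    (fun t ht => by linarith [hineq t ht])
    (by simp [hσ.map_zero, hσ.map_one]) (by simp [hσ.map_zero, hσ.map_one])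
    hφc.continuousOn (fun t _ => (hφ t).1) (fun t _ => (hφ t).2)
    fun t ht => by simpa using hσ.reflect_add_pos ht
  exact fun t ht => sub_nonneg.1 (hdiff t ht)

end IsNormalizedSolution

theorem isNormalizedSolution_id : IsNormalizedSolution 0 fun t => t where
  map_zero := rfl
  map_one := rfl
  pos _ ht := ht.1
  hasDerivAt_twice :=
    ⟨fun _ => 1, fun t => ⟨hasDerivAt_id t, by simpa using hasDerivAt_const t (1 : ℝ)⟩⟩

theorem isNormalizedSolution_sin {s : ℝ} (hs : 0 < s) (hsπ : s < Real.pi) :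
    IsNormalizedSolution (s ^ 2) fun t => Real.sin (t * s) / Real.sin s where
  map_zero := by simp
  map_one := by simp [(Real.sin_pos_of_pos_of_lt_pi hs hsπ).ne']
  pos t ht := div_pos
    (Real.sin_pos_of_pos_of_lt_pi (mul_pos ht.1 hs)
      ((mul_le_of_le_one_left hs.le ht.2).trans_lt hsπ))
    (Real.sin_pos_of_pos_of_lt_pi hs hsπ)
  hasDerivAt_twice := ⟨fun t => Real.cos (t * s) * s / Real.sin s, fun t =>
    ⟨(hasDerivAt_mul_const s).sin.div_const _,
      (((hasDerivAt_mul_const s).cos.mul_const s).div_const _).congr_deriv (by ring)⟩⟩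

theorem isNormalizedSolution_sinh {s : ℝ} (hs : 0 < s) :
    IsNormalizedSolution (-s ^ 2) fun t => Real.sinh (t * s) / Real.sinh s where
  map_zero := by simp
  map_one := by simp [(Real.sinh_pos_iff.2 hs).ne']
  pos t ht := div_pos (Real.sinh_pos_iff.2 (mul_pos ht.1 hs)) (Real.sinh_pos_iff.2 hs)
  hasDerivAt_twice := ⟨fun t => Real.cosh (t * s) * s / Real.sinh s, fun t =>
    ⟨(hasDerivAt_mul_const s).sinh.div_const _,
      (((hasDerivAt_mul_const s).cosh.mul_const s).div_const _).congr_deriv (by ring)⟩⟩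

theorem comparison_concavity_sigma_general (K θ : ℝ) (hθ : 0 < θ)
    (hKθ : 0 < K → K * θ ^ 2 < Real.pi ^ 2)
    (σ : ℝ → ℝ)
    (hσ : ∀ t, σ t =
      if 0 < K then Real.sin (t * θ * Real.sqrt K) / Real.sin (θ * Real.sqrt K)
      else if K = 0 then t
      else Real.sinh (t * θ * Real.sqrt (-K)) / Real.sinh (θ * Real.sqrt (-K)))
    (u u' u'' : ℝ → ℝ)
    (huc : ContinuousOn u (Icc 0 1))
    (hu : ∀ t ∈ Ioo (0:ℝ) 1, HasDerivAt u (u' t) t)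
    (hu' : ∀ t ∈ Ioo (0:ℝ) 1, HasDerivAt u' (u'' t) t)
    (hineq : ∀ t ∈ Ioo (0:ℝ) 1, u'' t + K * θ ^ 2 * u t ≤ 0) :
    ∀ t ∈ Icc (0:ℝ) 1, σ (1 - t) * u 0 + σ t * u 1 ≤ u t := by
  suffices IsNormalizedSolution (K * θ ^ 2) σ from this.le_of_supersolution huc hu hu' hineq
  rcases lt_trichotomy K 0 with hK | rfl | hK
  · have hs : 0 < θ * Real.sqrt (-K) := mul_pos hθ (Real.sqrt_pos.2 (neg_pos.2 hK))
    convert isNormalizedSolution_sinh hs using 1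
    · rw [mul_pow, Real.sq_sqrt (neg_nonneg.2 hK.le)]; ring
    · funext t; rw [hσ, if_neg hK.not_gt, if_neg hK.ne, mul_assoc]
  · convert isNormalizedSolution_id using 1
    · ring
    · funext t; simp [hσ]
  · have hs : 0 < θ * Real.sqrt K := mul_pos hθ (Real.sqrt_pos.2 hK)
    have hsq : (θ * Real.sqrt K) ^ 2 = K * θ ^ 2 := by rw [mul_pow, Real.sq_sqrt hK.le]; ring
    have hsπ : θ * Real.sqrt K < Real.pi :=
      lt_of_pow_lt_pow_left₀ 2 Real.pi_pos.le (hsq ▸ hKθ hK)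
    convert isNormalizedSolution_sin hs hsπ using 1
    · exact hsq.symm
    · funext t; rw [hσ, if_pos hK, mul_assoc]

/-- **Comparison principle for `u'' + Kθ²·u ≤ 0` with the constant-curvature distortion
coefficients.** Let `K ∈ ℝ`, `θ > 0`, with `Kθ² < π²` whenever `K > 0`, and let
`σ_{K,1}^{(t)}(θ)` be `sin(tθ√K)/sin(θ√K)` for `K > 0`, `t` for `K = 0`, and
`sinh(tθ√(−K))/sinh(θ√(−K))` for `K < 0`. If `u : [0,1] → (0,∞)` is continuous on `[0,1]`,
twice differentiable on `(0,1)` with `u'' + Kθ²·u ≤ 0`, then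
`u(t) ≥ σ_{K,1}^{(1−t)}(θ)·u(0) + σ_{K,1}^{(t)}(θ)·u(1)` for every `t ∈ [0,1]`. -/
theorem comparison_concavity_sigma (K θ : ℝ) (hθ : 0 < θ)
    (hKθ : 0 < K → K * θ ^ 2 < Real.pi ^ 2)
    (σ : ℝ → ℝ)
    (hσ : ∀ t, σ t =
      if 0 < K then Real.sin (t * θ * Real.sqrt K) / Real.sin (θ * Real.sqrt K)
      else if K = 0 then t
      else Real.sinh (t * θ * Real.sqrt (-K)) / Real.sinh (θ * Real.sqrt (-K)))
    (u u' u'' : ℝ → ℝ)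
    (hupos : ∀ t ∈ Icc (0:ℝ) 1, 0 < u t)
    (huc : ContinuousOn u (Icc 0 1))
    (hu : ∀ t ∈ Ioo (0:ℝ) 1, HasDerivAt u (u' t) t)
    (hu' : ∀ t ∈ Ioo (0:ℝ) 1, HasDerivAt u' (u'' t) t)
    (hineq : ∀ t ∈ Ioo (0:ℝ) 1, u'' t + K * θ ^ 2 * u t ≤ 0) :
    ∀ t ∈ Icc (0:ℝ) 1, σ (1 - t) * u 0 + σ t * u 1 ≤ u t :=
  comparison_concavity_sigma_general K θ hθ hKθ σ hσ u u' u'' huc hu hu' hineq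
end

section
/- Let θ > 0 and let κ₁, κ₂ : [0,θ] → ℝ be continuous with κ₁(r) ≤ κ₂(r) for all r ∈ [0,θ] and κ₁(r) < κ₂(r) for all r ∈ (0,θ). For i = 1,2, let vᵢ : [0,θ] → ℝ be a twice differentiable solution of vᵢ'' + κᵢ·vᵢ = 0 with vᵢ(0) = 0 and vᵢ'(0) = 1. If v₁ > 0 on (0,θ] and v₂ > 0 on (0,θ], then for every t ∈ (0,1) it holds v₁(tθ)/v₁(θ) < v₂(tθ)/v₂(θ). -/
open Set

/-- **Strict monotonicity of the generalized distortion coefficients (strong maximum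
principle).** If `κ₁ ≤ κ₂` are continuous on `[0,θ]` with `κ₁ < κ₂` on `(0,θ)`, and
`v₁, v₂` solve `vᵢ'' + κᵢvᵢ = 0` with `vᵢ(0) = 0`, `vᵢ'(0) = 1`, and both are positive on
`(0,θ]`, then `v₁(tθ)/v₁(θ) < v₂(tθ)/v₂(θ)` for every `t ∈ (0,1)`. -/
theorem distortion_strict_monotone_in_curvature (θ : ℝ) (hθ : 0 < θ)
    (κ₁ κ₂ : ℝ → ℝ)
    (hκ₁ : ContinuousOn κ₁ (Icc 0 θ)) (hκ₂ : ContinuousOn κ₂ (Icc 0 θ))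
    (hle : ∀ r ∈ Icc (0:ℝ) θ, κ₁ r ≤ κ₂ r)
    (hlt : ∀ r ∈ Ioo (0:ℝ) θ, κ₁ r < κ₂ r)
    (v₁ v₁' v₂ v₂' : ℝ → ℝ)
    (hv₁ : ∀ r ∈ Icc (0:ℝ) θ, HasDerivWithinAt v₁ (v₁' r) (Icc 0 θ) r)
    (hv₁' : ∀ r ∈ Icc (0:ℝ) θ, HasDerivWithinAt v₁' (-(κ₁ r * v₁ r)) (Icc 0 θ) r)
    (hv₁0 : v₁ 0 = 0) (hv₁'0 : v₁' 0 = 1)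
    (hv₂ : ∀ r ∈ Icc (0:ℝ) θ, HasDerivWithinAt v₂ (v₂' r) (Icc 0 θ) r)
    (hv₂' : ∀ r ∈ Icc (0:ℝ) θ, HasDerivWithinAt v₂' (-(κ₂ r * v₂ r)) (Icc 0 θ) r)
    (hv₂0 : v₂ 0 = 0) (hv₂'0 : v₂' 0 = 1)
    (hpos₁ : ∀ r ∈ Ioc (0:ℝ) θ, 0 < v₁ r)
    (hpos₂ : ∀ r ∈ Ioc (0:ℝ) θ, 0 < v₂ r) :
    ∀ t ∈ Ioo (0:ℝ) 1, v₁ (t * θ) / v₁ θ < v₂ (t * θ) / v₂ θ := by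
  intro t ht
  set W : ℝ → ℝ := fun r => v₂' r * v₁ r - v₁' r * v₂ r with hW
  -- continuity facts
  have hc₁ : ContinuousOn v₁ (Icc 0 θ) := fun x hx => (hv₁ x hx).continuousWithinAt
  have hc₂ : ContinuousOn v₂ (Icc 0 θ) := fun x hx => (hv₂ x hx).continuousWithinAt
  have hc₁' : ContinuousOn v₁' (Icc 0 θ) := fun x hx => (hv₁' x hx).continuousWithinAt
  have hc₂' : ContinuousOn v₂' (Icc 0 θ) := fun x hx => (hv₂' x hx).continuousWithinAt
  have hWc : ContinuousOn W (Icc 0 θ) := (hc₂'.mul hc₁).sub (hc₁'.mul hc₂)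
  -- derivative of W at interior points
  have hWderiv : ∀ x ∈ Ioo (0:ℝ) θ,
      HasDerivAt W ((κ₁ x - κ₂ x) * (v₁ x * v₂ x)) x := by
    intro x hx
    have hxI : x ∈ Icc (0:ℝ) θ := ⟨hx.1.le, hx.2.le⟩
    have hnhds : Icc (0:ℝ) θ ∈ nhds x := Icc_mem_nhds hx.1 hx.2
    have d₁ : HasDerivAt v₁ (v₁' x) x := (hv₁ x hxI).hasDerivAt hnhds
    have d₂ : HasDerivAt v₂ (v₂' x) x := (hv₂ x hxI).hasDerivAt hnhds
    have d₁' : HasDerivAt v₁' (-(κ₁ x * v₁ x)) x := (hv₁' x hxI).hasDerivAt hnhds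
    have d₂' : HasDerivAt v₂' (-(κ₂ x * v₂ x)) x := (hv₂' x hxI).hasDerivAt hnhds
    have : HasDerivAt W (-(κ₂ x * v₂ x) * v₁ x + v₂' x * v₁' x -
        (-(κ₁ x * v₁ x) * v₂ x + v₁' x * v₂' x)) x := (d₂'.mul d₁).sub (d₁'.mul d₂)
    convert this using 1
    ring
  -- W is strictly decreasing on [0, θ]
  have hWanti : StrictAntiOn W (Icc 0 θ) := by
    apply strictAntiOn_of_deriv_neg (convex_Icc 0 θ) hWc
    intro x hx
    rw [interior_Icc] at hx
    rw [(hWderiv x hx).deriv]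
    have h1 : κ₁ x - κ₂ x < 0 := sub_neg.mpr (hlt x hx)
    have h2 : 0 < v₁ x * v₂ x :=
      mul_pos (hpos₁ x ⟨hx.1, hx.2.le⟩) (hpos₂ x ⟨hx.1, hx.2.le⟩)
    exact mul_neg_of_neg_of_pos h1 h2
  have hW0 : W 0 = 0 := by simp [hW, hv₁0, hv₂0]
  have hWneg : ∀ x ∈ Ioc (0:ℝ) θ, W x < 0 := by
    intro x hx
    have := hWanti (left_mem_Icc.mpr hθ.le) ⟨hx.1.le, hx.2⟩ hx.1
    rwa [hW0] at this
  -- strict monotonicity of v₁ / v₂ on [tθ, θ]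
  have htθ : 0 < t * θ := mul_pos ht.1 hθ
  have htθθ : t * θ < θ := by nlinarith [ht.2, hθ]
  set g : ℝ → ℝ := fun r => v₁ r / v₂ r with hg
  have hsub : Icc (t * θ) θ ⊆ Icc 0 θ := Icc_subset_Icc htθ.le le_rfl
  have hsub' : Icc (t * θ) θ ⊆ Ioc 0 θ := fun x hx => ⟨lt_of_lt_of_le htθ hx.1, hx.2⟩
  have hgc : ContinuousOn g (Icc (t * θ) θ) := by
    apply ContinuousOn.div (hc₁.mono hsub) (hc₂.mono hsub)
    intro x hx
    exact (hpos₂ x (hsub' hx)).ne'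
  have hgmono : StrictMonoOn g (Icc (t * θ) θ) := by
    apply strictMonoOn_of_deriv_pos (convex_Icc _ _) hgc
    intro x hx
    rw [interior_Icc] at hx
    have hxI : x ∈ Ioo (0:ℝ) θ := ⟨lt_trans htθ hx.1, hx.2⟩
    have hxIcc : x ∈ Icc (0:ℝ) θ := ⟨hxI.1.le, hxI.2.le⟩
    have hnhds : Icc (0:ℝ) θ ∈ nhds x := Icc_mem_nhds hxI.1 hxI.2
    have d₁ : HasDerivAt v₁ (v₁' x) x := (hv₁ x hxIcc).hasDerivAt hnhds
    have d₂ : HasDerivAt v₂ (v₂' x) x := (hv₂ x hxIcc).hasDerivAt hnhds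
    have hv₂x : 0 < v₂ x := hpos₂ x ⟨hxI.1, hxI.2.le⟩
    have dg : HasDerivAt g ((v₁' x * v₂ x - v₁ x * v₂' x) / (v₂ x) ^ 2) x :=
      d₁.div d₂ hv₂x.ne'
    rw [dg.deriv]
    apply div_pos _ (pow_pos hv₂x 2)
    have := hWneg x ⟨hxI.1, hxI.2.le⟩
    simp only [hW] at this
    linarith
  have key : g (t * θ) < g θ :=
    hgmono ⟨le_rfl, htθθ.le⟩ (right_mem_Icc.mpr htθθ.le) htθθ
  have h1 : 0 < v₁ θ := hpos₁ θ ⟨hθ, le_rfl⟩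
  have h2 : 0 < v₂ θ := hpos₂ θ ⟨hθ, le_rfl⟩
  have h3 : 0 < v₂ (t * θ) := hpos₂ _ ⟨htθ, htθθ.le⟩
  rw [div_lt_div_iff₀ h1 h2]
  rw [hg, div_lt_div_iff₀ h3 h2] at key
  linarith
end

section
/- Let (X,d) be a metric space, let p ≥ 1 be an integer, and let μ, ν, λ be Borel probability measures on X. Suppose there are Borel sets Sμ, Sν ⊆ X with μ(Sμ) = 1 and ν(Sν) = 1, and Lipschitz maps T : Sμ → X and F : Sν → X with T_♯(μ restricted to Sμ) = ν and F_♯(ν restricted to Sν) = λ. If μ is concentrated on a countably ℋ^p-rectifiable subset of X and λ is absolutely continuous with respect to ℋ^p, then ν is concentrated on a countably ℋ^p-rectifiable subset of X and ν is absolutely continuous with respect to ℋ^p. -/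
open MeasureTheory
open scoped ENNReal NNReal

/-!
The absolute continuity of `ν` is pulled back along `F`: a Lipschitz map sends `ℋ^p`-null sets
to `ℋ^p`-null sets, so for an `ℋ^p`-null `N` the image `F (N ∩ Sν)` is `λ`-null, and
`N ∩ Sν ⊆ F⁻¹ (F (N ∩ Sν))` is `ν`-null. Rectifiability is pushed forward along `T`: composing
the Lipschitz charts of the rectifiable set carrying `μ` with `T` gives charts of `T (s ∩ Sμ)`.
To evaluate `ν = T_♯ μ` on the complement, `T (s ∩ Sμ)` must be enlarged to a Borel rectifiable
set. Splitting each chart domain into bounded pieces, the closure of the image of a piece is again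
a Lipschitz image, namely of the points of the closure of the piece at which the chart has a limit.
-/

/-- A subset `s` of a metric space `X` is countably `ℋ^p`-rectifiable if, up to an
`ℋ^p`-negligible set, it is covered by countably many Lipschitz images of subsets of `ℝ^p`. -/
def CountablyHausdorffRectifiable {X : Type*} [MetricSpace X]
    [MeasurableSpace X] [BorelSpace X] (p : ℕ) (s : Set X) : Prop :=
  ∃ (A : ℕ → Set (EuclideanSpace ℝ (Fin p))) (f : ℕ → EuclideanSpace ℝ (Fin p) → X)
    (L : ℕ → ℝ≥0),
    (∀ i, LipschitzOnWith (L i) (f i) (A i)) ∧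
      μH[(p : ℝ)] (s \ ⋃ i, f i '' A i) = 0

open Set Filter Topology

theorem UniformContinuousOn.cauchy_map_nhdsWithin {E X : Type*} [UniformSpace E] [UniformSpace X]
    {g : E → X} {S : Set E} (hg : UniformContinuousOn g S) {a : E} (ha : a ∈ closure S) :
    Cauchy (map g (𝓝[S] a)) := by
  have := mem_closure_iff_nhdsWithin_neBot.1 ha
  refine cauchy_map_iff.2 ⟨inferInstance, hg.mono_left ?_⟩
  exact le_inf ((Filter.prod_mono nhdsWithin_le_nhds nhdsWithin_le_nhds).trans cauchy_nhds.2)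
    (le_principal_iff.2 (prod_mem_prod self_mem_nhdsWithin self_mem_nhdsWithin))

theorem UniformContinuousOn.exists_tendsto_of_mem_closure_image {E X : Type*}
    [PseudoMetricSpace E] [MetricSpace X] {g : E → X} {S : Set E} (hg : UniformContinuousOn g S)
    (hS : IsCompact (closure S)) {x : X} (hx : x ∈ closure (g '' S)) :
    ∃ a ∈ closure S, Tendsto g (𝓝[S] a) (𝓝 x) := by
  obtain ⟨y, hyS, hyx⟩ := mem_closure_iff_seq_limit.1 hx
  choose u huS hu using hyS
  obtain ⟨a, ha, φ, hφ, hua⟩ := hS.tendsto_subseq fun n => subset_closure (huS n)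
  have hua' : Tendsto (u ∘ φ) atTop (𝓝[S] a) :=
    tendsto_nhdsWithin_iff.2 ⟨hua, Eventually.of_forall fun n => huS (φ n)⟩
  have hgux : Tendsto (g ∘ u ∘ φ) atTop (𝓝 x) := by
    simpa only [Function.comp_def, hu] using hyx.comp hφ.tendsto_atTop
  have hcluster : ClusterPt x (map g (𝓝[S] a)) :=
    (ClusterPt.of_le_nhds hgux).mono (map_mono hua')
  exact ⟨a, ha, le_nhds_of_cauchy_adhp (hg.cauchy_map_nhdsWithin ha) hcluster⟩

section LipschitzLimit

variable {E X : Type*} [PseudoMetricSpace E] [MetricSpace X] {K : ℝ≥0} {g : E → X} {S : Set E}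

theorem LipschitzOnWith.dist_le_mul_of_tendsto (hg : LipschitzOnWith K g S) {a b : E} {x y : X}
    (ha : a ∈ closure S) (hb : b ∈ closure S)
    (hx : Tendsto g (𝓝[S] a) (𝓝 x)) (hy : Tendsto g (𝓝[S] b) (𝓝 y)) :
    dist x y ≤ K * dist a b := by
  have := mem_closure_iff_nhdsWithin_neBot.1 ha
  have := mem_closure_iff_nhdsWithin_neBot.1 hb
  have h₁ : Tendsto Prod.fst (𝓝[S] a ×ˢ 𝓝[S] b) (𝓝[S] a) := tendsto_fst
  have h₂ : Tendsto Prod.snd (𝓝[S] a ×ˢ 𝓝[S] b) (𝓝[S] b) := tendsto_snd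
  refine le_of_tendsto_of_tendsto ((hx.comp h₁).dist (hy.comp h₂))
    (((h₁.mono_right nhdsWithin_le_nhds).dist (h₂.mono_right nhdsWithin_le_nhds)).const_mul _) ?_
  filter_upwards [prod_mem_prod self_mem_nhdsWithin self_mem_nhdsWithin] with q hq
  exact hg.dist_le_mul _ hq.1 _ hq.2

theorem LipschitzOnWith.exists_lipschitzOnWith_image_superset_closure
    (hg : LipschitzOnWith K g S) (hS : IsCompact (closure S)) :
    ∃ (A : Set E) (f : E → X), LipschitzOnWith K f A ∧ closure (g '' S) ⊆ f '' A := by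
  rcases S.eq_empty_or_nonempty with rfl | ⟨s, -⟩
  · exact ⟨∅, g, lipschitzOnWith_empty K g, by simp⟩
  have : Nonempty X := ⟨g s⟩
  refine ⟨{a | a ∈ closure S ∧ ∃ x, Tendsto g (𝓝[S] a) (𝓝 x)}, fun a => limUnder (𝓝[S] a) g,
    LipschitzOnWith.of_dist_le_mul fun a ha b hb => hg.dist_le_mul_of_tendsto ha.1 hb.1
      (tendsto_nhds_limUnder ha.2) (tendsto_nhds_limUnder hb.2), fun x hx => ?_⟩
  obtain ⟨a, ha, hax⟩ := hg.uniformContinuousOn.exists_tendsto_of_mem_closure_image hS hx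
  have := mem_closure_iff_nhdsWithin_neBot.1 ha
  exact ⟨a, ⟨ha, x, hax⟩, hax.limUnder_eq⟩

end LipschitzLimit

theorem LipschitzOnWith.hausdorffMeasure_image_null {X Y : Type*} [EMetricSpace X]
    [EMetricSpace Y] [MeasurableSpace X] [BorelSpace X] [MeasurableSpace Y] [BorelSpace Y]
    {K : ℝ≥0} {f : X → Y} {s : Set X} (hf : LipschitzOnWith K f s) {d : ℝ} (hd : 0 ≤ d)
    (hs : μH[d] s = 0) : μH[d] (f '' s) = 0 :=
  nonpos_iff_eq_zero.1 ((hf.hausdorffMeasure_image_le hd).trans_eq (by rw [hs, mul_zero]))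

section Rectifiable

variable {X Y : Type*} [MetricSpace X] [MeasurableSpace X] [BorelSpace X]
  [MetricSpace Y] [MeasurableSpace Y] [BorelSpace Y] {p : ℕ} {s : Set X}

theorem countablyHausdorffRectifiable_of_countable {ι : Type*} [Countable ι] [Nonempty ι]
    (A : ι → Set (EuclideanSpace ℝ (Fin p))) (f : ι → EuclideanSpace ℝ (Fin p) → X)
    (L : ι → ℝ≥0) (hf : ∀ i, LipschitzOnWith (L i) (f i) (A i))
    (hs : μH[(p : ℝ)] (s \ ⋃ i, f i '' A i) = 0) : CountablyHausdorffRectifiable p s := by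
  obtain ⟨e, he⟩ := exists_surjective_nat ι
  refine ⟨A ∘ e, f ∘ e, L ∘ e, fun n => hf (e n), ?_⟩
  rwa [← he.iUnion_comp fun i => f i '' A i] at hs

theorem CountablyHausdorffRectifiable.image (hs : CountablyHausdorffRectifiable p s)
    {K : ℝ≥0} {T : X → Y} {S : Set X} (hT : LipschitzOnWith K T S) :
    CountablyHausdorffRectifiable p (T '' (s ∩ S)) := by
  obtain ⟨A, f, L, hf, hnull⟩ := hs
  refine ⟨fun i => A i ∩ f i ⁻¹' S, fun i => T ∘ f i, fun i => K * L i,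
    fun i => hT.comp ((hf i).mono inter_subset_left) fun a ha => ha.2,
    measure_mono_null ?_ ((hT.mono inter_subset_left).hausdorffMeasure_image_null
      (Nat.cast_nonneg p) (measure_mono_null inter_subset_right hnull))⟩
  rintro _ ⟨⟨x, ⟨hxs, hxS⟩, rfl⟩, hx⟩
  refine ⟨x, ⟨hxS, hxs, fun hxU => hx ?_⟩, rfl⟩
  obtain ⟨i, a, ha, rfl⟩ := mem_iUnion.1 hxU
  exact mem_iUnion.2 ⟨i, a, ⟨ha, hxS⟩, rfl⟩

theorem CountablyHausdorffRectifiable.exists_measurableSet_superset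
    (hs : CountablyHausdorffRectifiable p s) :
    ∃ t, s ⊆ t ∧ MeasurableSet t ∧ CountablyHausdorffRectifiable p t := by
  obtain ⟨A, f, L, hf, hnull⟩ := hs
  let B : ℕ × ℕ → Set (EuclideanSpace ℝ (Fin p)) := fun q => A q.1 ∩ Metric.closedBall 0 q.2
  choose A' f' hf' hcover using fun q : ℕ × ℕ =>
    ((hf q.1).mono inter_subset_left).exists_lipschitzOnWith_image_superset_closure
      ((isCompact_closedBall _ _).closure_of_subset inter_subset_right : IsCompact (closure (B q)))
  refine ⟨(⋃ q, closure (f q.1 '' B q)) ∪ toMeasurable μH[(p : ℝ)] (s \ ⋃ i, f i '' A i),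
    fun x hx => ?_, (MeasurableSet.iUnion fun q => isClosed_closure.measurableSet).union
      (measurableSet_toMeasurable _ _), countablyHausdorffRectifiable_of_countable A' f' _ hf'
      (measure_mono_null ?_ ((measure_toMeasurable _).trans hnull))⟩
  · by_cases hxU : x ∈ ⋃ i, f i '' A i
    · obtain ⟨i, a, ha, rfl⟩ := mem_iUnion.1 hxU
      obtain ⟨n, hn⟩ := mem_iUnion.1 ((Metric.iUnion_closedBall_nat 0).ge (mem_univ a))
      exact Or.inl (mem_iUnion.2 ⟨(i, n), subset_closure ⟨a, ⟨ha, hn⟩, rfl⟩⟩)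
    · exact Or.inr (subset_toMeasurable _ _ ⟨hx, hxU⟩)
  · rintro x ⟨hx | hx, hx'⟩
    · exact absurd (iUnion_mono hcover hx) hx'
    · exact hx

theorem CountablyHausdorffRectifiable.exists_map_restrict_compl_eq_zero
    (hs : CountablyHausdorffRectifiable p s) {μ : Measure X} (hμs : μ sᶜ = 0)
    {K : ℝ≥0} {T : X → Y} {S : Set X} (hT : LipschitzOnWith K T S) (hS : MeasurableSet S)
    (hTm : AEMeasurable T (μ.restrict S)) :
    ∃ t, CountablyHausdorffRectifiable p t ∧ (μ.restrict S).map T tᶜ = 0 := by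
  obtain ⟨t, hst, ht, htr⟩ := (hs.image hT).exists_measurableSet_superset
  refine ⟨t, htr, ?_⟩
  rw [Measure.map_apply_of_aemeasurable hTm ht.compl]
  have hsub : T ⁻¹' tᶜ ⊆ sᶜ ∪ Sᶜ := fun x hx => not_and_or.1 fun h => hx (hst ⟨x, h, rfl⟩)
  refine measure_mono_null hsub (measure_union_null ?_ ?_)
  · exact nonpos_iff_eq_zero.1 ((Measure.restrict_apply_le _ _).trans hμs.le)
  · rw [Measure.restrict_apply hS.compl, compl_inter_self, measure_empty]

end Rectifiable

theorem LipschitzOnWith.restrict_absolutelyContinuous_hausdorffMeasure {X Y : Type*}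
    [EMetricSpace X] [EMetricSpace Y] [MeasurableSpace X] [BorelSpace X] [MeasurableSpace Y]
    [BorelSpace Y] {μ : Measure X} {K : ℝ≥0} {F : X → Y} {S : Set X}
    (hF : LipschitzOnWith K F S) (hS : MeasurableSet S) (hFm : AEMeasurable F (μ.restrict S))
    {d : ℝ} (hd : 0 ≤ d) (hmap : (μ.restrict S).map F ≪ μH[d]) :
    μ.restrict S ≪ μH[d] := by
  intro N hN
  have hFN : μH[d] (F '' (N ∩ S)) = 0 :=
    (hF.mono inter_subset_right).hausdorffMeasure_image_null hd
      (measure_mono_null inter_subset_left hN)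
  refine nonpos_iff_eq_zero.1 ?_
  calc μ.restrict S N = μ (N ∩ S) := Measure.restrict_apply' hS
    _ ≤ μ.restrict S (F ⁻¹' (F '' (N ∩ S))) := by
      rw [Measure.restrict_apply' hS]
      exact measure_mono (subset_inter (subset_preimage_image _ _) inter_subset_right)
    _ ≤ (μ.restrict S).map F (F '' (N ∩ S)) := Measure.le_map_apply hFm _
    _ = 0 := hmap hFN

theorem rectifiable_and_ac_propagation_general {X : Type*} [MetricSpace X]
    [MeasurableSpace X] [BorelSpace X]
    (p : ℕ)
    (μ ν lam : Measure X)
    [IsProbabilityMeasure ν] [IsProbabilityMeasure lam]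
    (Sμ Sν : Set X) (hSμm : MeasurableSet Sμ) (hSνm : MeasurableSet Sν)
    (hνS : ν Sν = 1)
    (T F : X → X) (LT LF : ℝ≥0)
    (hT : LipschitzOnWith LT T Sμ) (hF : LipschitzOnWith LF F Sν)
    (hTmap : (μ.restrict Sμ).map T = ν) (hFmap : (ν.restrict Sν).map F = lam)
    (hrect : ∃ s : Set X, CountablyHausdorffRectifiable p s ∧ μ sᶜ = 0)
    (hlam : lam ≪ μH[(p : ℝ)]) :
    (∃ s : Set X, CountablyHausdorffRectifiable p s ∧ ν sᶜ = 0) ∧ ν ≪ μH[(p : ℝ)] := by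
  have hTm : AEMeasurable T (μ.restrict Sμ) :=
    .of_map_ne_zero (hTmap ▸ IsProbabilityMeasure.ne_zero ν)
  have hFm : AEMeasurable F (ν.restrict Sν) :=
    .of_map_ne_zero (hFmap ▸ IsProbabilityMeasure.ne_zero lam)
  have hν : ν.restrict Sν = ν := Measure.restrict_eq_self_of_ae_mem
    ((mem_ae_iff_prob_eq_one hSνm).2 hνS)
  obtain ⟨s, hs, hμs⟩ := hrect
  refine ⟨hTmap ▸ hs.exists_map_restrict_compl_eq_zero hμs hT hSμm hTm, ?_⟩
  rw [← hν]
  exact hF.restrict_absolutelyContinuous_hausdorffMeasure hSνm hFm (Nat.cast_nonneg p)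
    (hFmap ▸ hlam)

/-- **Propagation of rectifiability and absolute continuity along Lipschitz transport maps.**
Let `μ, ν, lam` be Borel probability measures on `X`, with Lipschitz maps `T` (on a full
measure set `Sμ` of `μ`) and `F` (on a full measure set `Sν` of `ν`) pushing `μ` to `ν` and
`ν` to `lam` respectively. If `μ` is concentrated on a countably `ℋ^p`-rectifiable set and
`lam ≪ ℋ^p`, then `ν` is concentrated on a countably `ℋ^p`-rectifiable set and `ν ≪ ℋ^p`. -/
theorem rectifiable_and_ac_propagation {X : Type*} [MetricSpace X]
    [MeasurableSpace X] [BorelSpace X]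
    (p : ℕ) (hp : 1 ≤ p)
    (μ ν lam : Measure X)
    [IsProbabilityMeasure μ] [IsProbabilityMeasure ν] [IsProbabilityMeasure lam]
    (Sμ Sν : Set X) (hSμm : MeasurableSet Sμ) (hSνm : MeasurableSet Sν)
    (hμS : μ Sμ = 1) (hνS : ν Sν = 1)
    (T F : X → X) (LT LF : ℝ≥0)
    (hT : LipschitzOnWith LT T Sμ) (hF : LipschitzOnWith LF F Sν)
    (hTmap : (μ.restrict Sμ).map T = ν) (hFmap : (ν.restrict Sν).map F = lam)
    (hrect : ∃ s : Set X, CountablyHausdorffRectifiable p s ∧ μ sᶜ = 0)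
    (hlam : lam ≪ μH[(p : ℝ)]) :
    (∃ s : Set X, CountablyHausdorffRectifiable p s ∧ ν sᶜ = 0) ∧ ν ≪ μH[(p : ℝ)] :=
  rectifiable_and_ac_propagation_general p μ ν lam Sμ Sν hSμm hSνm hνS T F LT LF hT hF hTmap hFmap
    hrect hlam
end
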